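/- arXiv:1404.5876 — 6 statements merged into one kernel-verified Lean document; each statement's English description precedes it below -/
import Mathlib

section
/- For every m, n ∈ ℕ with m, n ≥ 1, the set CS_∞(ℝ^m, ℂ^n) is strongly 𝔠-algebrable in the algebra C(ℝ^m, ℂ^n): there exists a family (g_i)_{i∈I} of continuous maps ℝ^m → ℂ^n, indexed by a set I of cardinality 𝔠 (the continuum), such that for every N ∈ ℕ, every choice of distinct indices i₁, …, i_N ∈ I, and every nonzero polynomial P ∈ ℂ[z₁,…,z_N] with zero constant term, the map x ↦ P(g_{i₁}(x),…,g_{i_N}(x)) (where addition, scalar multiplication and multiplication on ℂ^n are taken coordinatewise) belongs to CS_∞(ℝ^m, ℂ^n); in particular it is not identically zero. -/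
/-!
Index the family by Cantor space `ℕ → Bool` and put `g c x = γ c ‖x‖` for curves `γ c : ℝ → ℂⁿ`.
On `(s, s + 1)` the curve `γ c` evaluates, at the length-`s` prefix of `c`, a fixed continuous map
`(0, 1) → ((Fin s → Bool) × Fin n → ℂ)` whose image contains the ball of radius `s`. Such a map
exists because every compact metric space is a continuous image of the Cantor set, which lies in
`[0, 1]` (Tietze extension, then a bump function). Finitely many distinct `c k` have distinct
prefixes of every large length `s`, so any prescribed values `w k ∈ ℂⁿ` are taken simultaneously,
`γ (c k) t = w k`, at some `t ∈ (s, s + 1)` for every large `s`; hence at points `x` of arbitrarily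
large norm. Finally, a nonzero polynomial `P` without constant term is nonconstant on the line
through `0` and a point where it does not vanish, so over `ℂ` it takes every value there.
-/

/-- `CSInf m X f` means `f : ℝ^m → X` is continuous and each fiber `f⁻¹({a})` is an
unbounded subset of `ℝ^m`; in particular such an `f` is surjective. -/
def CSInf (m : ℕ) (X : Type*) [TopologicalSpace X]
    (f : EuclideanSpace ℝ (Fin m) → X) : Prop :=
  Continuous f ∧ ∀ a : X, ¬ Bornology.IsBounded (f ⁻¹' {a})

open Set Filter

namespace MvPolynomial

theorem aeval_pi_apply {R σ ι : Type*} [CommSemiring R] (v : σ → ι → R) (P : MvPolynomial σ R)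
    (j : ι) : aeval v P j = eval (fun k => v k j) P := by
  rw [← coe_aeval_eq_eval]
  exact comp_aeval_apply (f := v) (Pi.evalAlgHom R (fun _ => R) j) P

variable {K σ : Type*} [Field K] [IsAlgClosed K]

theorem eval_surjective_of_coeff_zero_eq_zero {P : MvPolynomial σ K} (hP : P ≠ 0)
    (hP0 : coeff 0 P = 0) : Function.Surjective fun z : σ → K => eval z P := by
  obtain ⟨ζ, hζ⟩ : ∃ ζ : σ → K, eval ζ P ≠ 0 := by
    by_contra! h
    exact hP (funext fun z => by simp [h z])
  set q : Polynomial K := aeval (fun k => Polynomial.C (ζ k) * Polynomial.X) P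
  have hq (y : K) : q.eval y = eval (fun k => ζ k * y) P := by
    have := comp_aeval_apply (f := fun k => Polynomial.C (ζ k) * Polynomial.X)
      (Polynomial.aeval y) P
    simp only [Polynomial.coe_aeval_eq_eval, Polynomial.eval_mul, Polynomial.eval_C,
      Polynomial.eval_X] at this
    exact this
  have hdeg : q.natDegree ≠ 0 := by
    rw [Ne, Polynomial.natDegree_eq_zero]
    rintro ⟨r, hr⟩
    have h0 := hq 0
    have h1 := hq 1
    simp only [← hr, Polynomial.eval_C, mul_zero, mul_one] at h0 h1
    rw [← h1, h0, ← Pi.zero_def, eval_zero, constantCoeff_eq, hP0] at hζ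
    exact hζ rfl
  intro b
  obtain ⟨y, hy⟩ := IsAlgClosed.eval_surjective hdeg b
  exact ⟨fun k => ζ k * y, (hq y).symm.trans hy⟩

theorem aeval_pi_surjective_of_coeff_zero_eq_zero {ι : Type*} {P : MvPolynomial σ K} (hP : P ≠ 0)
    (hP0 : coeff 0 P = 0) : Function.Surjective fun w : σ → ι → K => aeval w P := by
  intro a
  choose z hz using fun j => eval_surjective_of_coeff_zero_eq_zero hP hP0 (a j)
  refine ⟨fun k j => z j k, ?_⟩
  funext j
  exact (aeval_pi_apply _ P j).trans (hz j)

end MvPolynomial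

section CantorImage

variable {E : Type*} [NormedAddCommGroup E] [NormedSpace ℝ E] [FiniteDimensional ℝ E]

theorem exists_continuous_subset_image_cantorSet {K : Set E} (hK : IsCompact K)
    (hne : K.Nonempty) : ∃ F : ℝ → E, Continuous F ∧ K ⊆ F '' cantorSet := by
  have := hne.to_subtype
  have := isCompact_iff_compactSpace.mp hK
  obtain ⟨f, hf, hsurj⟩ := exists_nat_bool_continuous_surjective_of_compact K
  obtain ⟨F, hF⟩ := ContinuousMap.exists_restrict_eq isClosed_cantorSet
    ⟨Subtype.val ∘ f ∘ cantorSetHomeomorphNatToBool, by fun_prop⟩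
  refine ⟨F, F.continuous, fun x hx => ?_⟩
  obtain ⟨a, ha⟩ := hsurj ⟨x, hx⟩
  refine ⟨cantorSetHomeomorphNatToBool.symm a, Subtype.prop _, ?_⟩
  have := congr($hF (cantorSetHomeomorphNatToBool.symm a))
  simpa [ha] using this

theorem exists_continuous_eqOn_zero_subset_image_Ioo {K : Set E} (hK : IsCompact K) :
    ∃ φ : ℝ → E, Continuous φ ∧ EqOn φ 0 (Ioo 0 1)ᶜ ∧ K ⊆ φ '' Ioo 0 1 := by
  rcases K.eq_empty_or_nonempty with rfl | hne
  · exact ⟨0, continuous_const, fun _ _ => rfl, empty_subset _⟩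
  obtain ⟨F, hF, hKF⟩ := exists_continuous_subset_image_cantorSet hK hne
  have hIcc : Icc (1 / 3 : ℝ) (2 / 3) ⊆ Ioo 0 1 := Icc_subset_Ioo (by norm_num) (by norm_num)
  obtain ⟨χ, hχ0, hχ1, -⟩ := exists_continuous_zero_one_of_isClosed isOpen_Ioo.isClosed_compl
    isClosed_Icc (disjoint_compl_left_iff_subset.mpr hIcc)
  -- `t ↦ 3 t - 1` maps `[1/3, 2/3]`, where the bump `χ` equals `1`, onto `[0, 1] ⊇ cantorSet`
  refine ⟨fun t => χ t • F (3 * t - 1), by fun_prop, fun t ht => by simp [hχ0 ht],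
    fun x hx => ?_⟩
  obtain ⟨c, hc, rfl⟩ := hKF hx
  obtain ⟨hc0, hc1⟩ := cantorSet_subset_unitInterval hc
  have ht : (c + 1) / 3 ∈ Icc (1 / 3 : ℝ) (2 / 3) := ⟨by linarith, by linarith⟩
  refine ⟨(c + 1) / 3, hIcc ht, ?_⟩
  simp only [hχ1 ht, Pi.one_apply, one_smul]
  ring_nf

end CantorImage

theorem locallyFinite_Ioo_natCast : LocallyFinite fun s : ℕ => Ioo (s : ℝ) (s + 1) := by
  intro t
  refine ⟨Iio (t + 1), Iio_mem_nhds (lt_add_one t), (finite_Iio ⌈t + 1⌉₊).subset ?_⟩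
  rintro s ⟨y, ⟨hsy, -⟩, hy⟩
  exact Nat.cast_lt.mp ((hsy.trans hy).trans_le (Nat.le_ceil _))

noncomputable def sweepPiece (n s : ℕ) : ℝ → ((Fin s → Bool) × Fin n → ℂ) :=
  (exists_continuous_eqOn_zero_subset_image_Ioo
    (isCompact_closedBall (0 : (Fin s → Bool) × Fin n → ℂ) s)).choose

noncomputable def sweepCurve (n : ℕ) (c : ℕ → Bool) (t : ℝ) : Fin n → ℂ :=
  ∑ᶠ s : ℕ, fun j => sweepPiece n s (t - s) (fun i : Fin s => c i, j)

section SweepCurve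

variable (n : ℕ)

theorem continuous_sweepPiece (s : ℕ) : Continuous (sweepPiece n s) :=
  (exists_continuous_eqOn_zero_subset_image_Ioo (isCompact_closedBall _ _)).choose_spec.1

theorem sweepPiece_eq_zero (s : ℕ) {t : ℝ} (ht : t ∉ Ioo 0 1) : sweepPiece n s t = 0 :=
  (exists_continuous_eqOn_zero_subset_image_Ioo (isCompact_closedBall _ _)).choose_spec.2.1 ht

theorem closedBall_subset_image_sweepPiece (s : ℕ) :
    Metric.closedBall 0 s ⊆ sweepPiece n s '' Ioo 0 1 :=
  (exists_continuous_eqOn_zero_subset_image_Ioo (isCompact_closedBall _ _)).choose_spec.2.2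

theorem support_sweepCurve_summand_subset (c : ℕ → Bool) (s : ℕ) :
    Function.support (fun t : ℝ => fun j => sweepPiece n s (t - s) (fun i : Fin s => c i, j)) ⊆
      Ioo (s : ℝ) (s + 1) := by
  intro t ht
  by_contra h
  have h0 : sweepPiece n s (t - s) = 0 := sweepPiece_eq_zero n s
    fun ⟨h1, h2⟩ => h ⟨by linarith, by linarith⟩
  exact ht (funext fun _ => congrFun h0 _)

theorem continuous_sweepCurve (c : ℕ → Bool) : Continuous (sweepCurve n c) :=
  continuous_finsum (fun s => continuous_pi fun _ => (continuous_apply _).comp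
      ((continuous_sweepPiece n s).comp (continuous_sub_right _)))
    (locallyFinite_Ioo_natCast.subset (support_sweepCurve_summand_subset n c))

theorem sweepCurve_eq_sweepPiece {c : ℕ → Bool} {s : ℕ} {t : ℝ} (ht : t ∈ Ioo (s : ℝ) (s + 1)) :
    sweepCurve n c t = fun j => sweepPiece n s (t - s) (fun i : Fin s => c i, j) := by
  refine finsum_eq_single _ s fun r hrs => ?_
  by_contra h
  obtain ⟨hr1, hr2⟩ := support_sweepCurve_summand_subset n c r h
  have : r < s + 1 := by exact_mod_cast hr1.trans ht.2
  have : s < r + 1 := by exact_mod_cast ht.1.trans hr2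
  omega

end SweepCurve

section Interpolation

variable {n N : ℕ} {c : Fin N → ℕ → Bool}

theorem exists_sweepCurve_eq {s : ℕ} (hs : Function.Injective fun k (i : Fin s) => c k i)
    (w : Fin N → Fin n → ℂ) (hw : ‖w‖ ≤ s) :
    ∃ t ∈ Ioo (s : ℝ) (s + 1), ∀ k, sweepCurve n (c k) t = w k := by
  set V : (Fin s → Bool) × Fin n → ℂ :=
    fun p => Function.extend (fun k (i : Fin s) => c k i) (fun k => w k p.2) 0 p.1
  have hV : V ∈ Metric.closedBall 0 s := by
    rw [mem_closedBall_zero_iff, pi_norm_le_iff_of_nonneg (Nat.cast_nonneg s)]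
    rintro ⟨q, j⟩
    by_cases hq : ∃ k, (fun i : Fin s => c k i) = q
    · obtain ⟨k, rfl⟩ := hq
      simp only [V, hs.extend_apply]
      exact (norm_le_pi_norm (w k) j).trans ((norm_le_pi_norm w k).trans hw)
    · simp [V, Function.extend_apply' _ _ _ hq]
  obtain ⟨t, ht, hVt⟩ := closedBall_subset_image_sweepPiece n s hV
  have hst : (s + t : ℝ) ∈ Ioo (s : ℝ) (s + 1) := ⟨by linarith [ht.1], by linarith [ht.2]⟩
  refine ⟨s + t, hst, fun k => ?_⟩
  rw [sweepCurve_eq_sweepPiece n hst, add_sub_cancel_left, hVt]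
  funext j
  exact hs.extend_apply _ _ k

theorem not_bddAbove_setOf_sweepCurve_eq (hc : Function.Injective c) (w : Fin N → Fin n → ℂ) :
    ¬ BddAbove {t | ∀ k, sweepCurve n (c k) t = w k} := by
  have hsep : ∀ᶠ s in atTop, Function.Injective fun k (i : Fin s) => c k i := by
    refine eventually_all.2 fun k => eventually_all.2 fun l => ?_
    by_cases hkl : k = l
    · exact Eventually.of_forall fun _ _ => hkl
    obtain ⟨i, hi⟩ := Function.ne_iff.mp (hc.ne hkl)
    filter_upwards [eventually_gt_atTop i] with s hs heq
    exact absurd (congrFun heq ⟨i, hs⟩) hi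
  rw [not_bddAbove_iff]
  intro R
  obtain ⟨s, hs, hws, hRs⟩ := (hsep.and ((eventually_ge_atTop ⌈‖w‖⌉₊).and
    (tendsto_natCast_atTop_atTop.eventually_gt_atTop R))).exists
  obtain ⟨t, ht, hwt⟩ := exists_sweepCurve_eq hs w (Nat.ceil_le.mp hws)
  exact ⟨t, hwt, hRs.trans ht.1⟩

end Interpolation

theorem not_isBounded_preimage_norm {E : Type*} [NormedAddCommGroup E] [NormedSpace ℝ E]
    [Nontrivial E] {S : Set ℝ} (hS : ¬ BddAbove S) :
    ¬ Bornology.IsBounded (norm ⁻¹' S : Set E) := by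
  intro hb
  obtain ⟨C, hC⟩ := isBounded_iff_forall_norm_le.1 hb
  refine hS ⟨max C 0, fun t ht => ?_⟩
  rcases le_or_gt t 0 with ht0 | ht0
  · exact ht0.trans (le_max_right _ _)
  obtain ⟨x, rfl⟩ := exists_norm_eq E ht0.le
  exact (hC x ht).trans (le_max_left _ _)

theorem stmt5_general (m n : ℕ) (hm : 1 ≤ m) :
    ∃ (ι : Type) (g : ι → EuclideanSpace ℝ (Fin m) → (Fin n → ℂ)),
      Cardinal.mk ι = Cardinal.continuum ∧
      (∀ i, Continuous (g i)) ∧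
      ∀ (N : ℕ) (idx : Fin N → ι), Function.Injective idx →
        ∀ P : MvPolynomial (Fin N) ℂ, P ≠ 0 → MvPolynomial.coeff 0 P = 0 →
          CSInf m (Fin n → ℂ)
            (fun x => MvPolynomial.aeval (fun k => g (idx k) x) P) := by
  have : Nonempty (Fin m) := ⟨⟨0, hm⟩⟩
  refine ⟨ℕ → Bool, fun c x => sweepCurve n c ‖x‖, by simp,
    fun c => (continuous_sweepCurve n c).comp continuous_norm, ?_⟩
  intro N idx hidx P hP hP0
  refine ⟨continuous_pi fun j => ?_, fun a hb => ?_⟩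
  · simp only [MvPolynomial.aeval_pi_apply]
    exact (MvPolynomial.continuous_eval P).comp (continuous_pi fun k =>
      (continuous_apply j).comp ((continuous_sweepCurve n (idx k)).comp continuous_norm))
  obtain ⟨w, rfl⟩ := MvPolynomial.aeval_pi_surjective_of_coeff_zero_eq_zero hP hP0 a
  refine not_isBounded_preimage_norm (not_bddAbove_setOf_sweepCurve_eq hidx w) (hb.subset ?_)
  intro x hx
  simp only [mem_preimage, mem_singleton_iff]
  exact congrArg (MvPolynomial.aeval · P) (funext hx)

theorem stmt5 (m n : ℕ) (hm : 1 ≤ m) (hn : 1 ≤ n) :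
    ∃ (ι : Type) (g : ι → EuclideanSpace ℝ (Fin m) → (Fin n → ℂ)),
      Cardinal.mk ι = Cardinal.continuum ∧
      (∀ i, Continuous (g i)) ∧
      ∀ (N : ℕ) (idx : Fin N → ι), Function.Injective idx →
        ∀ P : MvPolynomial (Fin N) ℂ, P ≠ 0 → MvPolynomial.coeff 0 P = 0 →
          CSInf m (Fin n → ℂ)
            (fun x => MvPolynomial.aeval (fun k => g (idx k) x) P) :=
  stmt5_general m n hm
end

section
/- Let X be a nonempty Hausdorff topological space. The following assertions are equivalent: (a) X is a σ-Peano space; (b) there exists a continuous map f : ℝ → X such that for every a ∈ X the preimage f⁻¹({a}) is an unbounded subset of ℝ (in particular f is surjective); (c) there exists a continuous surjection from ℝ onto X. -/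
/-!
By the Hahn–Mazurkiewicz theorem each `K n` is the range of a loop at a common base point
`x ∈ K 0`; running the `n`-th loop on `[n, n + 1]` gives a continuous `f : ℝ → X` which meets
every point of `K N` in each interval `[n, n + 1]` with `n ≥ N`.

The Hahn–Mazurkiewicz loop is a uniform limit of step functions along finer and finer nets: each
step of the `k`-th stage, of size `< δₖ`, is replaced by a `δₖ₊₁`-chain that stays in an
`εₖ`-ball and visits the nearby points of a `δₖ₊₁`-net, which uniform local connectedness makes
possible. Padding these chains to a common length keeps the stages aligned in time, so they
converge uniformly, and the small steps make the limit continuous.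

Conversely, the images `f '' [-n, n]` of a continuous surjection `f : ℝ → X` are Peano: a
continuous image of a compact metric space in a Hausdorff space is a quotient of it, hence
locally connected, and second countable because the map is closed with compact fibres.
-/

open Metric Set Filter Topology

/-- A Peano space: a nonempty compact, connected, locally connected, metrizable
topological space. -/
def IsPeanoSpace (X : Type*) [TopologicalSpace X] : Prop :=
  Nonempty X ∧ CompactSpace X ∧ ConnectedSpace X ∧ LocallyConnectedSpace X ∧
    TopologicalSpace.MetrizableSpace X

/-- A σ-Peano space: an increasing sequence of subsets, each a Peano space with the
subspace topology, whose union is the whole space. -/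
def IsSigmaPeano (X : Type*) [TopologicalSpace X] : Prop :=
  ∃ K : ℕ → Set X, Monotone K ∧ (∀ n, IsPeanoSpace (K n)) ∧ (⋃ n, K n) = Set.univ

section EpsChain

variable {P : Type*} [PseudoMetricSpace P]

structure IsEpsChain (δ : ℝ) (w : ℕ → P) (n : ℕ) (x y : P) : Prop where
  apply_zero : w 0 = x
  apply_of_le : ∀ i, n ≤ i → w i = y
  dist_lt : ∀ i, dist (w i) (w (i + 1)) < δ

namespace IsEpsChain

variable {δ : ℝ} {w w₁ w₂ : ℕ → P} {n a b : ℕ} {x y z : P}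

lemma mono (h : IsEpsChain δ w n x y) {n' : ℕ} (hn : n ≤ n') : IsEpsChain δ w n' x y :=
  ⟨h.apply_zero, fun i hi => h.apply_of_le i (hn.trans hi), h.dist_lt⟩

lemma exists_le_of_mem_range (h : IsEpsChain δ w n x y) {p : P} (hp : p ∈ range w) :
    ∃ i ≤ n, w i = p := by
  obtain ⟨i, rfl⟩ := hp
  rcases le_or_gt i n with hi | hi
  · exact ⟨i, hi, rfl⟩
  · exact ⟨n, le_rfl, by rw [h.apply_of_le n le_rfl, h.apply_of_le i hi.le]⟩

lemma exists_append (h₁ : IsEpsChain δ w₁ a x y) (h₂ : IsEpsChain δ w₂ b y z) :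
    ∃ w, IsEpsChain δ w (a + b) x z ∧ range w = range w₁ ∪ range w₂ := by
  have hjoin : w₁ a = w₂ 0 := by rw [h₁.apply_of_le a le_rfl, h₂.apply_zero]
  refine ⟨fun i => if i < a then w₁ i else w₂ (i - a), ⟨?_, ?_, fun i => ?_⟩, ?_⟩
  · rcases Nat.eq_zero_or_pos a with rfl | ha
    · simpa [← hjoin] using h₁.apply_zero
    · simpa [ha] using h₁.apply_zero
  · intro i hi
    simpa [show ¬i < a by omega] using h₂.apply_of_le (i - a) (by omega)
  · rcases lt_trichotomy (i + 1) a with hi | hi | hi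
    · simpa [hi, show i < a by omega] using h₁.dist_lt i
    · simpa [← hi, ← hjoin] using h₁.dist_lt i
    · simpa [show ¬i < a by omega, show ¬i + 1 < a by omega,
        show i + 1 - a = i - a + 1 by omega] using h₂.dist_lt (i - a)
  · apply Subset.antisymm
    · rintro _ ⟨i, rfl⟩
      by_cases hi : i < a
      · exact Or.inl ⟨i, by simp [hi]⟩
      · exact Or.inr ⟨i - a, by simp [hi]⟩
    · rintro _ (⟨i, rfl⟩ | ⟨i, rfl⟩)
      · by_cases hi : i < a
        · exact ⟨i, by simp [hi]⟩
        · exact ⟨a, by simp [h₁.apply_of_le i (not_lt.1 hi), ← h₁.apply_of_le a le_rfl, hjoin]⟩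
      · exact ⟨a + i, by simp⟩

end IsEpsChain

lemma IsPreconnected.exists_isEpsChain {S : Set P} (hS : IsPreconnected S) {δ : ℝ} (hδ : 0 < δ)
    {x y : P} (hx : x ∈ S) (hy : y ∈ S) :
    ∃ w n, IsEpsChain δ w n x y ∧ range w ⊆ S := by
  refine hS.induction₂' (fun x y => ∃ w n, IsEpsChain δ w n x y ∧ range w ⊆ S) ?_ ?_ hx hy
  · intro x hx
    filter_upwards [inter_mem_nhdsWithin S (ball_mem_nhds x hδ), self_mem_nhdsWithin]
      with y ⟨_, hxy⟩ hy
    have step : ∀ {u v : P}, u ∈ S → v ∈ S → dist u v < δ →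
        ∃ w n, IsEpsChain δ w n u v ∧ range w ⊆ S := fun {u v} hu hv huv =>
      ⟨fun i => if i = 0 then u else v, 1, ⟨rfl, fun i hi => by simp [show i ≠ 0 by omega],
        fun i => by rcases i with _ | i <;> simp [huv, hδ]⟩, by
        rintro _ ⟨i, rfl⟩; dsimp only; split_ifs <;> assumption⟩
    exact ⟨step hx hy (by rwa [dist_comm]), step hy hx hxy⟩
  · rintro x y z - - - ⟨w₁, a, h₁, hw₁⟩ ⟨w₂, b, h₂, hw₂⟩
    obtain ⟨w, hw, hrange⟩ := h₁.exists_append h₂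
    exact ⟨w, a + b, hw, hrange ▸ union_subset hw₁ hw₂⟩

/-- The `δ`-`ε` condition of uniform local connectedness. -/
def LocallyConnectedAtScale (P : Type*) [PseudoMetricSpace P] (δ ε : ℝ) : Prop :=
  ∀ x y : P, dist x y < δ → ∃ S, IsPreconnected S ∧ x ∈ S ∧ y ∈ S ∧ S ⊆ ball x ε

lemma locallyConnectedAtScale_of_forall_dist_lt [PreconnectedSpace P] {δ ε : ℝ}
    (h : ∀ x y : P, dist x y < ε) : LocallyConnectedAtScale P δ ε :=
  fun x _ _ => ⟨univ, isPreconnected_univ, trivial, trivial, fun z _ => h z x⟩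

lemma exists_locallyConnectedAtScale [CompactSpace P] [LocallyConnectedSpace P] {ε : ℝ}
    (hε : 0 < ε) : ∃ δ, 0 < δ ∧ δ ≤ ε ∧ LocallyConnectedAtScale P δ ε := by
  have hV : ∀ z : P, ∃ V, IsOpen V ∧ z ∈ V ∧ IsPreconnected V ∧ V ⊆ ball z (ε / 2) := fun z => by
    obtain ⟨V, hVsub, hVo, hzV, hVc⟩ := locallyConnectedSpace_iff_subsets_isOpen_isConnected.1
      ‹_› z (ball z (ε / 2)) (ball_mem_nhds z (half_pos hε))
    exact ⟨V, hVo, hzV, hVc.isPreconnected, hVsub⟩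
  choose V hVo hzV hVc hVsub using hV
  obtain ⟨δ, hδ, hball⟩ := lebesgue_number_lemma_of_metric isCompact_univ hVo
    fun z _ => mem_iUnion.2 ⟨z, hzV z⟩
  refine ⟨min δ ε, lt_min hδ hε, min_le_right _ _, fun x y hxy => ?_⟩
  obtain ⟨z, hz⟩ := hball x trivial
  have hxV : x ∈ V z := hz (mem_ball_self hδ)
  refine ⟨V z, hVc z, hxV, hz (by rw [mem_ball, dist_comm]; exact hxy.trans_le (min_le_left _ _)),
    fun w hw => ?_⟩
  calc dist w x ≤ dist w z + dist x z := dist_triangle_right w x z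
    _ < ε / 2 + ε / 2 := add_lt_add (hVsub z hw) (hVsub z hxV)
    _ = ε := add_halves ε

lemma LocallyConnectedAtScale.exists_isEpsChain_visiting {δ ε δ' : ℝ}
    (hU : LocallyConnectedAtScale P δ ε) (hδ' : 0 < δ') {x y : P} (hxy : dist x y < δ)
    (N : Finset P) (hN : ∀ p ∈ N, dist x p < δ) :
    ∃ w n, IsEpsChain δ' w n x y ∧ range w ⊆ ball x ε ∧ ↑N ⊆ range w := by
  classical
  induction N using Finset.induction_on with
  | empty =>
    obtain ⟨S, hS, hxS, hyS, hSε⟩ := hU x y hxy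
    obtain ⟨w, n, hw, hwS⟩ := hS.exists_isEpsChain hδ' hxS hyS
    exact ⟨w, n, hw, hwS.trans hSε, by simp⟩
  | insert p N _ ih =>
    obtain ⟨w, n, hw, hwε, hNw⟩ := ih fun q hq => hN q (Finset.mem_insert_of_mem hq)
    obtain ⟨S, hS, hxS, hpS, hSε⟩ := hU x p (hN p (Finset.mem_insert_self p N))
    obtain ⟨u, a, hu, huS⟩ := hS.exists_isEpsChain hδ' hxS hpS
    obtain ⟨v, b, hv, hvS⟩ := hS.exists_isEpsChain hδ' hpS hxS
    obtain ⟨uv, huv, huvr⟩ := hu.exists_append hv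
    obtain ⟨w', hw', hw'r⟩ := huv.exists_append hw
    refine ⟨w', _, hw', ?_, ?_⟩
    · rw [hw'r, huvr]
      exact union_subset (union_subset (huS.trans hSε) (hvS.trans hSε)) hwε
    · rw [Finset.coe_insert, hw'r, huvr]
      refine insert_subset (Or.inl (Or.inr ⟨0, hv.apply_zero⟩)) (hNw.trans subset_union_right)

end EpsChain

def concatBlocks {α : Type*} (W : ℕ → ℕ → α) (L m : ℕ) (y : α) (i : ℕ) : α :=
  if i < m * L then W (i / L) (i % L) else y

lemma concatBlocks_mul_add {α : Type*} {W : ℕ → ℕ → α} {L m : ℕ} (y : α) {j r : ℕ} (hj : j < m)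
    (hr : r < L) : concatBlocks W L m y (j * L + r) = W j r := by
  have hjr : j * L + r < m * L := by nlinarith
  rw [concatBlocks, if_pos hjr, Nat.mul_comm j, Nat.mul_add_div (by omega), Nat.mul_add_mod,
    Nat.div_eq_of_lt hr, Nat.mod_eq_of_lt hr, add_zero]

section Blocks

variable {P : Type*} [PseudoMetricSpace P] {W : ℕ → ℕ → P} {g : ℕ → P} {L m : ℕ} {δ : ℝ}

lemma concatBlocks_succ (hL : 0 < L) (hW : ∀ j < m, IsEpsChain δ (W j) L (g j) (g (j + 1)))
    {i : ℕ} (hi : i < m * L) : concatBlocks W L m (g m) (i + 1) = W (i / L) (i % L + 1) := by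
  have hj : i / L < m := (Nat.div_lt_iff_lt_mul hL).2 hi
  have hr : i % L + 1 ≤ L := Nat.mod_lt i hL
  have hi' : i = i / L * L + i % L := (Nat.div_add_mod' i L).symm
  rcases hr.lt_or_eq with hr1 | hr1
  · rw [hi', add_assoc, concatBlocks_mul_add _ hj hr1, ← hi']
  · rw [hr1, (hW _ hj).apply_of_le L le_rfl]
    have hi1 : i + 1 = (i / L + 1) * L := by rw [add_mul, one_mul]; omega
    rcases (show i / L + 1 ≤ m from hj).lt_or_eq with hj1 | hj1
    · rw [hi1, ← add_zero ((i / L + 1) * L), concatBlocks_mul_add _ hj1 hL, (hW _ hj1).apply_zero]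
    · rw [concatBlocks, if_neg (by rw [hi1, hj1]; exact lt_irrefl _), hj1]

lemma isEpsChain_concatBlocks (hδ : 0 < δ) (hL : 0 < L)
    (hW : ∀ j < m, IsEpsChain δ (W j) L (g j) (g (j + 1))) :
    IsEpsChain δ (concatBlocks W L m (g m)) (m * L) (g 0) (g m) where
  apply_zero := by
    rcases Nat.eq_zero_or_pos m with rfl | hm
    · simp [concatBlocks]
    · simpa [concatBlocks, Nat.mul_pos hm hL] using (hW 0 hm).apply_zero
  apply_of_le i hi := by simp [concatBlocks, not_lt.2 hi]
  dist_lt i := by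
    by_cases hi : i < m * L
    · rw [concatBlocks_succ hL hW hi, concatBlocks, if_pos hi]
      exact (hW _ ((Nat.div_lt_iff_lt_mul hL).2 hi)).dist_lt _
    · simpa [concatBlocks, hi, show ¬i + 1 < m * L by omega] using hδ

/-- A stage of the Hahn–Mazurkiewicz construction. -/
structure NetLoop (x₀ : P) (δ : ℝ) where
  g : ℕ → P
  m : ℕ
  isEpsChain : IsEpsChain δ g m x₀ x₀
  exists_dist_lt : ∀ p, ∃ i < m, dist p (g i) < δ

namespace NetLoop

variable {x₀ : P} {ε δ' : ℝ}

def const (x₀ : P) (h : ∀ x y : P, dist x y < δ) : NetLoop x₀ δ where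
  g _ := x₀
  m := 1
  isEpsChain := ⟨rfl, fun _ _ => rfl, fun _ => h x₀ x₀⟩
  exists_dist_lt p := ⟨0, one_pos, h p x₀⟩

lemma m_pos (c : NetLoop x₀ δ) : 0 < c.m := by
  obtain ⟨i, hi, -⟩ := c.exists_dist_lt x₀
  omega

lemma exists_blocks (c : NetLoop x₀ δ) (hU : LocallyConnectedAtScale P δ ε) (hδ' : 0 < δ')
    (N : Finset P) : ∃ (W : ℕ → ℕ → P) (L : ℕ), 0 < L ∧
      (∀ j < c.m, IsEpsChain δ' (W j) L (c.g j) (c.g (j + 1)) ∧ range (W j) ⊆ ball (c.g j) ε) ∧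
      ∀ q ∈ N, ∃ j < c.m, ∃ r < L, W j r = q := by
  classical
  choose a ha hga using c.exists_dist_lt
  have hblock : ∀ j, ∃ w n, j < c.m → IsEpsChain δ' w n (c.g j) (c.g (j + 1)) ∧
      range w ⊆ ball (c.g j) ε ∧ ↑(N.filter (a · = j)) ⊆ range w := by
    intro j
    by_cases hj : j < c.m
    · obtain ⟨w, n, h⟩ := hU.exists_isEpsChain_visiting hδ' (c.isEpsChain.dist_lt j)
        (N.filter (a · = j)) fun p hp => (Finset.mem_filter.1 hp).2 ▸ dist_comm p _ ▸ hga p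
      exact ⟨w, n, fun _ => h⟩
    · exact ⟨fun _ => x₀, 0, fun h => absurd h hj⟩
  choose W n hW using hblock
  have hnL : ∀ j < c.m, n j < ∑ j ∈ Finset.range c.m, n j + 1 := fun j hj => Nat.lt_succ_of_le
    (Finset.single_le_sum (fun _ _ => Nat.zero_le _) (Finset.mem_range.2 hj))
  refine ⟨W, _, Nat.succ_pos _, fun j hj => ⟨(hW j hj).1.mono (hnL j hj).le, (hW j hj).2.1⟩,
    fun q hq => ?_⟩
  obtain ⟨r, hr, hWr⟩ := (hW _ (ha q)).1.exists_le_of_mem_range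
    ((hW _ (ha q)).2.2 (Finset.mem_filter.2 ⟨hq, rfl⟩))
  exact ⟨a q, ha q, r, hr.trans_lt (hnL _ (ha q)), hWr⟩

lemma exists_refine_index [CompactSpace P] (c : NetLoop x₀ δ)
    (hU : LocallyConnectedAtScale P δ ε) (hδ' : 0 < δ') :
    ∃ c' : NetLoop x₀ δ', ∃ L, 0 < L ∧ c'.m = c.m * L ∧
      ∀ i, dist (c'.g i) (c.g (i / L)) < ε := by
  obtain ⟨T, -, hT, hTcov⟩ := finite_cover_balls_of_compact (isCompact_univ (X := P)) hδ'
  obtain ⟨W, L, hL, hW, hTW⟩ := c.exists_blocks hU hδ' hT.toFinset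
  have hε : 0 < ε := by simpa [(hW 0 c.m_pos).1.apply_zero] using (hW 0 c.m_pos).2 ⟨0, rfl⟩
  have hgm : c.g c.m = x₀ := c.isEpsChain.apply_of_le c.m le_rfl
  refine ⟨⟨concatBlocks W L c.m (c.g c.m), c.m * L, ?_, fun p => ?_⟩, L, hL, rfl, fun i => ?_⟩
  · simpa only [c.isEpsChain.apply_zero, hgm] using
      isEpsChain_concatBlocks hδ' hL fun j hj => (hW j hj).1
  · obtain ⟨q, hq, hpq⟩ := mem_iUnion₂.1 (hTcov (mem_univ p))
    obtain ⟨j, hj, r, hr, rfl⟩ := hTW q (hT.mem_toFinset.2 hq)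
    refine ⟨j * L + r, ?_, ?_⟩
    · calc j * L + r < (j + 1) * L := by rw [add_mul, one_mul]; omega
        _ ≤ c.m * L := Nat.mul_le_mul_right _ hj
    · rwa [concatBlocks_mul_add _ hj hr]
  · dsimp only
    by_cases hi : i < c.m * L
    · rw [concatBlocks, if_pos hi, ← mem_ball]
      exact (hW _ ((Nat.div_lt_iff_lt_mul hL).2 hi)).2 ⟨_, rfl⟩
    · rwa [concatBlocks, if_neg hi, hgm, c.isEpsChain.apply_of_le (i / L)
        ((Nat.le_div_iff_mul_le hL).2 (not_lt.1 hi)), dist_self]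

noncomputable def toFun (c : NetLoop x₀ δ) (t : ℝ) : P := c.g ⌊t * c.m⌋₊

lemma exists_refine [CompactSpace P] (c : NetLoop x₀ δ) (hU : LocallyConnectedAtScale P δ ε)
    (hδ' : 0 < δ') : ∃ c' : NetLoop x₀ δ', ∀ t, dist (c'.toFun t) (c.toFun t) < ε := by
  obtain ⟨c', L, hL, hm, h⟩ := c.exists_refine_index hU hδ'
  refine ⟨c', fun t => ?_⟩
  have hfloor : ⌊t * c'.m⌋₊ / L = ⌊t * c.m⌋₊ := by
    rw [← Nat.floor_div_natCast, hm, Nat.cast_mul, ← mul_assoc,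
      mul_div_cancel_right₀ _ (Nat.cast_ne_zero.2 hL.ne')]
  simpa only [toFun, hfloor] using h ⌊t * c'.m⌋₊

lemma toFun_zero (c : NetLoop x₀ δ) : c.toFun 0 = x₀ := by
  simp [toFun, c.isEpsChain.apply_zero]

lemma toFun_one (c : NetLoop x₀ δ) : c.toFun 1 = x₀ := by
  simp [toFun, c.isEpsChain.apply_of_le c.m le_rfl]

lemma exists_dist_toFun_lt (c : NetLoop x₀ δ) (p : P) :
    ∃ t ∈ Icc (0 : ℝ) 1, dist p (c.toFun t) < δ := by
  obtain ⟨i, hi, hp⟩ := c.exists_dist_lt p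
  have hm : (0 : ℝ) < c.m := Nat.cast_pos.2 c.m_pos
  refine ⟨i / c.m, ⟨by positivity, div_le_one_of_le₀ (by exact_mod_cast hi.le) hm.le⟩, ?_⟩
  rwa [toFun, div_mul_cancel₀ _ hm.ne', Nat.floor_natCast]

lemma dist_toFun_lt (c : NetLoop x₀ δ) {s t : ℝ} (hst : dist s t < 1 / c.m) :
    dist (c.toFun s) (c.toFun t) < δ := by
  have hm : (0 : ℝ) < c.m := Nat.cast_pos.2 c.m_pos
  have hδ : 0 < δ := by
    obtain ⟨i, -, h⟩ := c.exists_dist_lt x₀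
    exact dist_nonneg.trans_lt h
  have hlt : |s * c.m - t * c.m| < 1 := by
    rwa [← sub_mul, abs_mul, abs_of_pos hm, ← lt_div_iff₀ hm, ← Real.dist_eq]
  have h₁ : ⌊s * c.m⌋₊ < ⌊t * c.m⌋₊ + 2 := (Nat.floor_lt' (by omega)).2 <| by
    push_cast; linarith [abs_lt.1 hlt, Nat.lt_floor_add_one (t * c.m)]
  have h₂ : ⌊t * c.m⌋₊ < ⌊s * c.m⌋₊ + 2 := (Nat.floor_lt' (by omega)).2 <| by
    push_cast; linarith [abs_lt.1 hlt, Nat.lt_floor_add_one (s * c.m)]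
  rw [toFun, toFun]
  rcases (show ⌊s * c.m⌋₊ = ⌊t * c.m⌋₊ ∨ ⌊s * c.m⌋₊ = ⌊t * c.m⌋₊ + 1 ∨
      ⌊t * c.m⌋₊ = ⌊s * c.m⌋₊ + 1 by omega) with h | h | h
  · rwa [h, dist_self]
  · rw [h, dist_comm]
    exact c.isEpsChain.dist_lt _
  · rw [h]
    exact c.isEpsChain.dist_lt _

end NetLoop

end Blocks

lemma TendstoUniformly.uniformContinuous_of_oscillation {ι α β : Type*} [PseudoMetricSpace α]
    [PseudoMetricSpace β] {l : Filter ι} [l.NeBot] {f : ι → α → β} {F : α → β}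
    (hF : TendstoUniformly f F l)
    (hosc : ∀ ε > 0, ∀ᶠ i in l, ∃ η > 0, ∀ s t, dist s t < η → dist (f i s) (f i t) < ε) :
    UniformContinuous F := by
  refine Metric.uniformContinuous_iff.2 fun ε hε => ?_
  obtain ⟨i, hFi, η, hη, hi⟩ := ((Metric.tendstoUniformly_iff.1 hF (ε / 3) (by positivity)).and
    (hosc (ε / 3) (by positivity))).exists
  refine ⟨η, hη, fun {s t} hst => ?_⟩
  calc dist (F s) (F t) ≤ dist (F s) (f i s) + dist (f i s) (f i t) + dist (f i t) (F t) :=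
        dist_triangle4 _ _ _ _
    _ < ε / 3 + ε / 3 + ε / 3 := by
        gcongr
        exacts [hFi s, hi s t hst, dist_comm (F t) _ ▸ hFi t]
    _ = ε := by ring

lemma exists_tendstoUniformly_of_dist_succ_le {α β : Type*} [PseudoMetricSpace β] [CompleteSpace β]
    {f : ℕ → α → β} {C r : ℝ} (hr₀ : 0 ≤ r) (hr : r < 1)
    (h : ∀ k t, dist (f k t) (f (k + 1) t) ≤ C * r ^ k) : ∃ F, TendstoUniformly f F atTop := by
  choose F hF using fun t =>
    cauchySeq_tendsto_of_complete (cauchySeq_of_le_geometric r C hr (h · t))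
  refine ⟨F, Metric.tendstoUniformly_iff.2 fun ε hε => ?_⟩
  have hlim : Tendsto (fun k => C * r ^ k / (1 - r)) atTop (𝓝 0) := by
    simpa using ((tendsto_pow_atTop_nhds_zero_of_lt_one hr₀ hr).const_mul C).div_const (1 - r)
  filter_upwards [hlim.eventually (gt_mem_nhds hε)] with k hk t
  rw [dist_comm]
  exact (dist_le_of_le_geometric_of_tendsto r C hr (h · t) (hF t) k).trans_lt hk

section HahnMazurkiewicz

variable {P : Type*} [MetricSpace P] [CompactSpace P] [ConnectedSpace P] [LocallyConnectedSpace P]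

lemma exists_netLoop_seq (x₀ : P) {ε : ℕ → ℝ} (hε : ∀ k, 0 < ε k) :
    ∃ δ : ℕ → ℝ, ∃ c : ∀ k, NetLoop x₀ (δ k), (∀ k, δ k ≤ ε k) ∧
      ∀ k t, dist ((c (k + 1)).toFun t) ((c k).toFun t) < ε k := by
  choose δ hδ hδε hU using fun k => exists_locallyConnectedAtScale (P := P) (hε k)
  obtain ⟨D, hD⟩ : ∃ D, ∀ x y : P, dist x y < D := ⟨diam (univ : Set P) + 1, fun x y =>
    (dist_le_diam_of_mem isCompact_univ.isBounded trivial trivial).trans_lt (lt_add_one _)⟩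
  obtain ⟨c₀, -⟩ := (NetLoop.const x₀ hD).exists_refine
    (locallyConnectedAtScale_of_forall_dist_lt (δ := D) hD) (hδ 0)
  choose next hnext using fun k (c : NetLoop x₀ (δ k)) => c.exists_refine (hU k) (hδ (k + 1))
  exact ⟨δ, fun k => Nat.rec c₀ next k, hδε, fun k => hnext k _⟩

lemma exists_continuous_surjOn_Icc (x₀ : P) :
    ∃ F : ℝ → P, Continuous F ∧ F 0 = x₀ ∧ F 1 = x₀ ∧ SurjOn F (Icc 0 1) univ := by
  have : CompleteSpace P := complete_of_compact
  obtain ⟨δ, c, hδ, hc⟩ := exists_netLoop_seq x₀ (ε := fun k => (1 / 2 : ℝ) ^ k) (by simp)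
  obtain ⟨F, hF⟩ := exists_tendstoUniformly_of_dist_succ_le (f := fun k => (c k).toFun) (C := 1)
    (by norm_num : (0 : ℝ) ≤ 1 / 2) (by norm_num) fun k t => by
      rw [dist_comm, one_mul]; exact (hc k t).le
  have hδlim : ∀ ε > 0, ∀ᶠ k in atTop, δ k < ε := fun ε hε =>
    ((tendsto_pow_atTop_nhds_zero_of_lt_one (by norm_num) (by norm_num)).eventually
      (gt_mem_nhds hε)).mono fun k hk => (hδ k).trans_lt hk
  have hFc : Continuous F := (hF.uniformContinuous_of_oscillation fun ε hε =>
    (hδlim ε hε).mono fun k hk => ⟨1 / (c k).m, by simp [(c k).m_pos],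
      fun s t hst => ((c k).dist_toFun_lt hst).trans hk⟩).continuous
  refine ⟨F, hFc, tendsto_nhds_unique (hF.tendsto_at 0) (by simp [NetLoop.toFun_zero]),
    tendsto_nhds_unique (hF.tendsto_at 1) (by simp [NetLoop.toFun_one]), fun p _ => ?_⟩
  rw [← (isCompact_Icc.image hFc).isClosed.closure_eq, Metric.mem_closure_iff]
  intro ε hε
  obtain ⟨k, hk, hkF⟩ := ((hδlim (ε / 2) (half_pos hε)).and
    (Metric.tendstoUniformly_iff.1 hF (ε / 2) (half_pos hε))).exists
  obtain ⟨t, ht, hpt⟩ := (c k).exists_dist_toFun_lt p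
  refine ⟨F t, mem_image_of_mem F ht, ?_⟩
  calc dist p (F t) ≤ dist p ((c k).toFun t) + dist ((c k).toFun t) (F t) := dist_triangle _ _ _
    _ < ε / 2 + ε / 2 := add_lt_add (hpt.trans hk) (dist_comm (F t) _ ▸ hkF t)
    _ = ε := add_halves ε

/-- **Hahn–Mazurkiewicz**, for loops. -/
theorem exists_path_surjective (x₀ : P) : ∃ γ : Path x₀ x₀, Function.Surjective γ := by
  obtain ⟨F, hFc, hF0, hF1, hF⟩ := exists_continuous_surjOn_Icc x₀
  refine ⟨⟨⟨fun t => F t, hFc.comp continuous_subtype_val⟩, hF0, hF1⟩, fun p => ?_⟩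
  obtain ⟨t, ht, rfl⟩ := hF (mem_univ p)
  exact ⟨⟨t, ht⟩, rfl⟩

end HahnMazurkiewicz

section SigmaPeano

variable {X : Type*} [TopologicalSpace X]

lemma continuous_floor_fract {q : ℤ → ℝ → X} (hq : ∀ n, ContinuousOn (q n) (Icc 0 1))
    (hq1 : ∀ n, q n 1 = q (n + 1) 0) : Continuous fun t => q ⌊t⌋ (Int.fract t) := by
  refine (locallyFinite_Icc_of_tendsto (f := fun n : ℤ => (n : ℝ)) (g := fun n => (n : ℝ) + 1)
    tendsto_intCast_atTop_atTop
    (tendsto_atBot_add_const_right _ 1 (tendsto_intCast_atBot_iff.2 tendsto_id))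
    ).continuous (eq_univ_of_forall fun t => mem_iUnion.2
      ⟨⌊t⌋, Int.floor_le t, (Int.lt_floor_add_one t).le⟩) (fun _ => isClosed_Icc) fun n => ?_
  refine ((hq n).comp (continuousOn_id.sub continuousOn_const) fun t ht =>
    ⟨sub_nonneg.2 ht.1, sub_le_iff_le_add'.2 ht.2⟩).congr fun t ht => ?_
  rcases ht.2.lt_or_eq with h | rfl
  · simp [Int.floor_eq_iff.2 ⟨ht.1, h⟩, Int.fract]
  · simp [hq1]

lemma Path.exists_mem_Ico_extend_eq {x a : X} (γ : Path x x) (ha : a ∈ range γ) :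
    ∃ u ∈ Ico (0 : ℝ) 1, γ.extend u = a := by
  obtain ⟨u, rfl⟩ := ha
  rcases u.2.2.lt_or_eq with hu | hu
  · exact ⟨u, ⟨u.2.1, hu⟩, γ.extend_extends' u⟩
  · refine ⟨0, ⟨le_rfl, one_pos⟩, ?_⟩
    rw [γ.extend_zero, show u = 1 from Subtype.ext hu, γ.target]

lemma IsPeanoSpace.exists_path_range_eq {K : Set X} (hK : IsPeanoSpace K) {x : X} (hx : x ∈ K) :
    ∃ γ : Path x x, range γ = K := by
  obtain ⟨-, hcpt, hconn, hlc, hmet⟩ := hK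
  let := TopologicalSpace.metrizableSpaceMetric K
  obtain ⟨γ, hγ⟩ := exists_path_surjective (⟨x, hx⟩ : K)
  refine ⟨γ.map continuous_subtype_val, ?_⟩
  rw [show ⇑(γ.map continuous_subtype_val) = Subtype.val ∘ γ from rfl, range_comp, hγ.range_eq,
    image_univ, Subtype.range_coe]

theorem IsSigmaPeano.exists_continuous_not_isBounded_preimage (h : IsSigmaPeano X) :
    ∃ f : ℝ → X, Continuous f ∧ ∀ a : X, ¬ Bornology.IsBounded (f ⁻¹' {a}) := by
  obtain ⟨K, hmono, hK, hcover⟩ := h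
  obtain ⟨⟨x, hx⟩⟩ := (hK 0).1
  choose γ hγ using fun n => (hK n).exists_path_range_eq (hmono (Nat.zero_le n) hx)
  refine ⟨fun t => (γ ⌊t⌋.toNat).extend (Int.fract t), continuous_floor_fract
    (fun n => (γ n.toNat).extend.continuous.continuousOn) (fun n => by simp), fun a hbdd => ?_⟩
  obtain ⟨N, haN⟩ := mem_iUnion.1 (hcover ▸ mem_univ a)
  refine not_bddAbove_iff.2 (fun R => ?_) hbdd.bddAbove
  set n := max N (⌈R⌉₊ + 1)
  obtain ⟨u, hu, hγu⟩ := (γ n).exists_mem_Ico_extend_eq (hγ n ▸ hmono (le_max_left _ _) haN)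
  refine ⟨n + u, ?_, ?_⟩
  · have hfloor : ⌊(n : ℝ) + u⌋ = n := by
      rw [Int.floor_eq_iff]; push_cast; constructor <;> linarith [hu.1, hu.2]
    simp only [mem_preimage, mem_singleton_iff, Int.fract, hfloor, Int.toNat_natCast,
      Int.cast_natCast, add_sub_cancel_left, hγu]
  · have : (⌈R⌉₊ : ℝ) + 1 ≤ n := by exact_mod_cast le_max_right _ _
    linarith [Nat.le_ceil R, hu.1]

end SigmaPeano

/-- The sets `Y \ f '' (A \ ⋃ S)`, for finite families `S` of basic open sets of `A`, form a
countable basis of `Y`. -/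
theorem IsProperMap.secondCountableTopology {A Y : Type*} [TopologicalSpace A] [TopologicalSpace Y]
    [SecondCountableTopology A] {f : A → Y} (hf : IsProperMap f) (hs : Function.Surjective f) :
    SecondCountableTopology Y := by
  open TopologicalSpace in
  let B := countableBasis A
  have hB := isBasis_countableBasis A
  let V : Set (Set A) → Set Y := fun S => (f '' (⋃₀ S)ᶜ)ᶜ
  refine (isTopologicalBasis_of_isOpen_of_nhds (s := V '' {S | S.Finite ∧ S ⊆ B}) ?_ ?_)
    |>.secondCountableTopology
      ((countable_ofPred_finite_subset (countable_countableBasis A)).image V)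
  · rintro _ ⟨S, ⟨-, hSB⟩, rfl⟩
    exact (hf.isClosedMap _
      (isOpen_sUnion fun s hs => hB.isOpen (hSB hs)).isClosed_compl).isOpen_compl
  · intro y U hyU hU
    have hcover : f ⁻¹' {y} ⊆ ⋃ s ∈ {s ∈ B | s ⊆ f ⁻¹' U}, s := fun a ha => by
      obtain ⟨s, hsB, has, hsU⟩ := hB.exists_subset_of_mem_open (show f a ∈ U from ha ▸ hyU)
        (hU.preimage hf.continuous)
      exact mem_biUnion ⟨hsB, hsU⟩ has
    obtain ⟨S, hSsub, hSfin, hyS⟩ := (hf.isCompact_preimage isCompact_singleton)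
      |>.elim_finite_subcover_image (fun s hs => hB.isOpen hs.1) hcover
    refine ⟨V S, ⟨S, ⟨hSfin, fun s hs => (hSsub hs).1⟩, rfl⟩, ?_, ?_⟩
    · rintro ⟨a, ha, rfl⟩
      obtain ⟨s, hs, has⟩ := mem_iUnion₂.1 (hyS rfl)
      exact ha ⟨s, hs, has⟩
    · intro z hz
      obtain ⟨a, rfl⟩ := hs z
      by_contra hU
      exact hz ⟨a, fun ⟨s, hs, has⟩ => hU ((hSsub hs).2 has), rfl⟩

section PeanoImage

variable {X : Type*} [TopologicalSpace X]

theorem IsPeanoSpace.of_surjective {A : Type*} [TopologicalSpace A] [T2Space X]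
    (hA : IsPeanoSpace A) {f : A → X} (hf : Continuous f) (hs : Function.Surjective f) :
    IsPeanoSpace X := by
  obtain ⟨⟨a⟩, hcpt, hconn, hlc, hmet⟩ := hA
  let := TopologicalSpace.metrizableSpaceMetric A
  have : CompactSpace X := ⟨hs.range_eq ▸ isCompact_range hf⟩
  have : LocallyConnectedSpace X :=
    (hf.isClosedMap.isQuotientMap hf hs).isCoinducing.locallyConnectedSpace
  have : SecondCountableTopology X := hf.isProperMap.secondCountableTopology hs
  exact ⟨⟨f a⟩, ‹_›, hs.connectedSpace hf, ‹_›,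
    TopologicalSpace.metrizableSpace_of_t3_secondCountable X⟩

lemma isPeanoSpace_Icc {a b : ℝ} (h : a ≤ b) : IsPeanoSpace (Icc a b) :=
  ⟨⟨⟨a, left_mem_Icc.2 h⟩⟩, isCompact_iff_compactSpace.1 isCompact_Icc,
    isConnected_iff_connectedSpace.1 (isConnected_Icc h),
    (isQuotientMap_projIcc (h := h)).isCoinducing.locallyConnectedSpace, inferInstance⟩

theorem isSigmaPeano_of_continuous_surjective [T2Space X] {f : ℝ → X} (hf : Continuous f)
    (hs : Function.Surjective f) : IsSigmaPeano X := by
  refine ⟨fun n => f '' Icc (-n) n,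
    fun m n hmn => image_mono (Icc_subset_Icc (by simpa) (by simpa)),
    fun n => (isPeanoSpace_Icc (by simp)).of_surjective
      ((hf.comp continuous_subtype_val).subtype_mk _) imageFactorization_surjective, ?_⟩
  refine eq_univ_of_forall fun x => ?_
  obtain ⟨t, rfl⟩ := hs x
  exact mem_iUnion.2 ⟨⌈|t|⌉₊, mem_image_of_mem f (abs_le.1 (Nat.le_ceil _))⟩

end PeanoImage

theorem stmt6_general (X : Type*) [TopologicalSpace X] [T2Space X] :
    List.TFAE
      [IsSigmaPeano X,
        ∃ f : ℝ → X, Continuous f ∧ ∀ a : X, ¬ Bornology.IsBounded (f ⁻¹' {a}),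
        ∃ f : ℝ → X, Continuous f ∧ Function.Surjective f] := by
  tfae_have 1 → 2 := IsSigmaPeano.exists_continuous_not_isBounded_preimage
  tfae_have 2 → 3
  | ⟨f, hf, hunb⟩ => ⟨f, hf, fun a => Bornology.nonempty_of_not_isBounded (hunb a)⟩
  tfae_have 3 → 1
  | ⟨f, hf, hs⟩ => isSigmaPeano_of_continuous_surjective hf hs
  tfae_finish

theorem stmt6 (X : Type*) [TopologicalSpace X] [T2Space X] [Nonempty X] :
    List.TFAE
      [IsSigmaPeano X,
        ∃ f : ℝ → X, Continuous f ∧ ∀ a : X, ¬ Bornology.IsBounded (f ⁻¹' {a}),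
        ∃ f : ℝ → X, Continuous f ∧ Function.Surjective f] :=
  stmt6_general X
end

section
/- If X is a Hausdorff σ-Peano space, then the set C(ℝ, X) of continuous maps from ℝ to X has cardinality at most 𝔠 (the cardinality of the continuum). -/
/-!
Each Peano piece is compact metrizable, hence second countable, so a T₀ point of it is
determined by the set of basic open sets containing it: the pieces, and therefore `X`,
have at most `𝔠` points. A continuous map `ℝ → X` into a Hausdorff space is determined by
its values on the countable dense set `ℚ`, which leaves at most `𝔠 ^ ℵ₀ = 𝔠` of them.
-/

open Cardinal TopologicalSpace

theorem Cardinal.mk_le_continuum_of_secondCountableTopology (Y : Type*) [TopologicalSpace Y]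
    [T0Space Y] [SecondCountableTopology Y] : #Y ≤ 𝔠 := by
  have hB := isBasis_countableBasis Y
  have hinj : Function.Injective fun y : Y => {s : countableBasis Y | y ∈ (s : Set Y)} := by
    intro x y hxy
    have hmem : ∀ t ∈ countableBasis Y, x ∈ t ↔ y ∈ t := fun t ht =>
      Set.ext_iff.1 hxy ⟨t, ht⟩
    refine Inseparable.eq <| hB.nhds_hasBasis.ext hB.nhds_hasBasis
      (fun t ht => ⟨t, ⟨ht.1, (hmem t ht.1).1 ht.2⟩, subset_rfl⟩)
      (fun t ht => ⟨t, ⟨ht.1, (hmem t ht.1).2 ht.2⟩, subset_rfl⟩)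
  calc #Y ≤ #(Set (countableBasis Y)) := mk_le_of_injective hinj
    _ = 2 ^ #(countableBasis Y) := mk_set
    _ ≤ 2 ^ ℵ₀ := power_le_power_left two_ne_zero
        (mk_le_aleph0_iff.2 (countable_countableBasis Y).to_subtype)
    _ = 𝔠 := two_power_aleph0

theorem IsPeanoSpace.mk_le_continuum {Y : Type*} [TopologicalSpace Y] (hY : IsPeanoSpace Y) :
    #Y ≤ 𝔠 := by
  obtain ⟨-, hcompact, -, -, hmetrizable⟩ := hY
  let _ : MetricSpace Y := metrizableSpaceMetric Y
  exact mk_le_continuum_of_secondCountableTopology Y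

theorem Cardinal.mk_le_continuum_of_iUnion_eq_univ {X : Type*} {K : ℕ → Set X}
    (hK : ∀ n, #(K n) ≤ 𝔠) (hU : ⋃ n, K n = Set.univ) : #X ≤ 𝔠 := by
  rw [← lift_le_continuum.{_, 0}, ← mk_univ, ← hU]
  calc lift.{0} #(⋃ n, K n) ≤ sum fun n => #(K n) := mk_iUnion_le_sum_mk_lift
    _ ≤ sum fun _ : ℕ => 𝔠 := sum_le_sum _ _ hK
    _ = 𝔠 := by simp [aleph0_mul_continuum]

theorem IsSigmaPeano.mk_le_continuum {X : Type*} [TopologicalSpace X] (hX : IsSigmaPeano X) :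
    #X ≤ 𝔠 := by
  obtain ⟨K, -, hK, hU⟩ := hX
  exact mk_le_continuum_of_iUnion_eq_univ (fun n => (hK n).mk_le_continuum) hU

theorem ContinuousMap.mk_le_continuum_of_separableSpace {α β : Type*} [TopologicalSpace α]
    [SeparableSpace α] [TopologicalSpace β] [T2Space β] (hβ : #β ≤ 𝔠) : #C(α, β) ≤ 𝔠 := by
  obtain ⟨s, hs_countable, hs_dense⟩ := exists_countable_dense α
  have hinj : Function.Injective fun f : C(α, β) => ⇑(f.restrict s) :=
    DFunLike.coe_injective.comp (injective_restrict hs_dense)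
  have hs : lift.{_} #s ≤ ℵ₀ := lift_le_aleph0.2 (mk_le_aleph0_iff.2 hs_countable.to_subtype)
  calc #C(α, β) ≤ #(s → β) := mk_le_of_injective hinj
    _ = lift.{_} #β ^ lift.{_} #s := mk_arrow s β
    _ ≤ 𝔠 ^ ℵ₀ := (power_le_power_right (lift_le_continuum.2 hβ)).trans
        (power_le_power_left continuum_ne_zero hs)
    _ = 𝔠 := continuum_power_aleph0

theorem stmt7 (X : Type*) [TopologicalSpace X] [T2Space X] (h : IsSigmaPeano X) :
    Cardinal.mk C(ℝ, X) ≤ Cardinal.continuum :=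
  ContinuousMap.mk_le_continuum_of_separableSpace h.mk_le_continuum
end

section
/- For every pair m, n ∈ ℕ with m, n ≥ 1, the set CS_∞(ℝ^m, ℝ^n) is 𝔠-lineable in C(ℝ^m, ℝ^n): there exists a linearly independent family of cardinality 𝔠 (the continuum) in the real vector space C(ℝ^m, ℝ^n) such that every nonzero finite linear combination of its members belongs to CS_∞(ℝ^m, ℝ^n). -/
/-!
Take a curve `γ : ℝ → ℝ × ℝⁿ` all of whose fibres are unbounded: a continuous extension of a
surjection from the Cantor set onto the unit ball (Hausdorff–Alexandroff, then Tietze), rescaled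
by `2k` on each `[2k, 2k + 1]`. With `φ x = γ x₀`, the linear map `h ↦ h(φ₁) • φ₂` from `C(ℝ, ℝ)`
to `C(ℝᵐ, ℝⁿ)` is injective, and when `h u ≠ 0` the fibre of its image over `a` contains the
unbounded fibre `φ⁻¹(u, a / h u)`. So the images of the independent exponentials `t ↦ exp (c t)`
do it.
-/

open Metric Set Bornology Real

theorem IsCompact.exists_continuous_image_Icc_superset {X : Type*} [NormedAddCommGroup X]
    [NormedSpace ℝ X] [FiniteDimensional ℝ X] {K : Set X} (hK : IsCompact K)
    (hne : K.Nonempty) : ∃ S : C(ℝ, X), K ⊆ S '' Icc 0 1 := by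
  have := isCompact_iff_compactSpace.mp hK
  have := hne.to_subtype
  obtain ⟨f, hf, hsurj⟩ := exists_nat_bool_continuous_surjective_of_compact K
  let g : C(cantorSet, X) := ⟨fun x ↦ f (cantorSetHomeomorphNatToBool x), by fun_prop⟩
  obtain ⟨S, hS⟩ := ContinuousMap.exists_restrict_eq isClosed_cantorSet g
  refine ⟨S, fun y hy ↦ ?_⟩
  obtain ⟨b, hb⟩ := hsurj ⟨y, hy⟩
  let x := cantorSetHomeomorphNatToBool.symm b
  refine ⟨x, cantorSet_subset_unitInterval x.2, ?_⟩
  simpa [g, x, hb] using congr($hS x)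

noncomputable def triangleWave (t : ℝ) : ℝ := arccos (cos (π * t)) / π

@[fun_prop]
theorem continuous_triangleWave : Continuous triangleWave := by
  unfold triangleWave; fun_prop

theorem triangleWave_two_mul_add (k : ℕ) {s : ℝ} (hs : s ∈ Icc 0 1) :
    triangleWave (2 * k + s) = s := by
  have h : π * (2 * k + s) = π * s + k * (2 * π) := by ring
  rw [triangleWave, h, cos_add_nat_mul_two_pi,
    arccos_cos (by nlinarith [pi_pos, hs.1]) (by nlinarith [pi_pos, hs.2]),
    mul_div_cancel_left₀ _ pi_ne_zero]

theorem exists_continuous_forall_not_isBounded_preimage {X : Type*} [NormedAddCommGroup X]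
    [NormedSpace ℝ X] [FiniteDimensional ℝ X] :
    ∃ γ : C(ℝ, X), ∀ p, ¬IsBounded (γ ⁻¹' {p}) := by
  obtain ⟨S, hS⟩ := (isCompact_closedBall (0 : X) 1).exists_continuous_image_Icc_superset
    (nonempty_closedBall.2 zero_le_one)
  -- on `[2k, 2k + 1]` this is `t ↦ 2k • S (t - 2k)`
  refine ⟨⟨fun t ↦ (t - triangleWave t) • S (triangleWave t), by fun_prop⟩, fun p ↦ ?_⟩
  rw [isBounded_iff_bddBelow_bddAbove, not_and_or, not_bddAbove_iff]
  refine .inr fun N ↦ ?_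
  obtain ⟨k, hk⟩ := exists_nat_gt (max N ‖p‖)
  have hk₀ : (0 : ℝ) < k := (norm_nonneg p).trans_lt ((le_max_right _ _).trans_lt hk)
  obtain ⟨s, hs, hSs⟩ := hS (a := (2 * k : ℝ)⁻¹ • p) <| by
    rw [mem_closedBall_zero_iff, norm_smul, norm_inv, norm_of_nonneg (by positivity),
      inv_mul_le_iff₀ (by positivity)]
    linarith [le_max_right N ‖p‖]
  refine ⟨2 * k + s, ?_, ?_⟩
  · simp only [mem_preimage, ContinuousMap.coe_mk, mem_singleton_iff,
      triangleWave_two_mul_add k hs, add_sub_cancel_right, hSs]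
    rw [smul_inv_smul₀ (by positivity)]
  · linarith [le_max_left N ‖p‖, hs.1]

theorem LipschitzWith.not_isBounded_preimage {α β : Type*} [PseudoMetricSpace α]
    [PseudoMetricSpace β] {K : NNReal} {f : α → β} (hf : LipschitzWith K f)
    (hsurj : Function.Surjective f) {A : Set β} (hA : ¬IsBounded A) :
    ¬IsBounded (f ⁻¹' A) := fun hb ↦
  hA (image_preimage_eq A hsurj ▸ hf.isBounded_image hb)

noncomputable def expMul (c : ℝ) : C(ℝ, ℝ) := ⟨fun t ↦ exp (c * t), by fun_prop⟩

theorem linearIndependent_expMul : LinearIndependent ℝ expMul := by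
  let χ (c : ℝ) : Multiplicative ℝ →* ℝ :=
    { toFun t := exp (c * t.toAdd)
      map_one' := by simp
      map_mul' a b := by simp [mul_add, exp_add] }
  have hχ : Function.Injective χ := fun c c' h ↦ by
    simpa [χ] using congr($h (.ofAdd 1))
  exact .of_comp (ContinuousMap.coeFnLinearMap ℝ) ((linearIndependent_monoidHom _ ℝ).comp χ hχ)

section

variable {D E : Type*} [TopologicalSpace D] [NormedAddCommGroup E] [NormedSpace ℝ E]

noncomputable def fstSMulSnd (φ : C(D, ℝ × E)) : C(ℝ, ℝ) →ₗ[ℝ] C(D, E) where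
  toFun h := ⟨fun x ↦ h (φ x).1 • (φ x).2, by fun_prop⟩
  map_add' h h' := by ext x; simp [add_smul]
  map_smul' c h := by ext x; simp [smul_smul]

@[simp]
theorem fstSMulSnd_apply (φ : C(D, ℝ × E)) (h : C(ℝ, ℝ)) (x : D) :
    fstSMulSnd φ h x = h (φ x).1 • (φ x).2 := rfl

theorem fstSMulSnd_injective [Nontrivial E] {φ : C(D, ℝ × E)} (hφ : Function.Surjective φ) :
    Function.Injective (fstSMulSnd φ) := by
  refine (injective_iff_map_eq_zero _).2 fun h hh ↦ ContinuousMap.ext fun u ↦ ?_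
  obtain ⟨e, he⟩ := exists_ne (0 : E)
  obtain ⟨x, hx⟩ := hφ (u, e)
  simpa [hx, he] using congr($hh x)

theorem not_isBounded_fstSMulSnd_preimage [Bornology D] {φ : C(D, ℝ × E)}
    (hφ : ∀ p, ¬IsBounded (φ ⁻¹' {p})) {h : C(ℝ, ℝ)} (hh : h ≠ 0) (a : E) :
    ¬IsBounded (fstSMulSnd φ h ⁻¹' {a}) := by
  obtain ⟨u, hu⟩ : ∃ u, h u ≠ 0 := by
    by_contra! H
    exact hh (ContinuousMap.ext H)
  refine fun hb ↦ hφ (u, (h u)⁻¹ • a) (hb.subset fun x (hx : φ x = _) ↦ ?_)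
  simp [mem_preimage, hx, smul_inv_smul₀ hu]

end

theorem stmt9 (m n : ℕ) (hm : 1 ≤ m) (hn : 1 ≤ n) :
    ∃ (ι : Type) (F : ι → C(EuclideanSpace ℝ (Fin m), EuclideanSpace ℝ (Fin n))),
      Cardinal.mk ι = Cardinal.continuum ∧
      LinearIndependent ℝ F ∧
      ∀ g ∈ Submodule.span ℝ (Set.range F), g ≠ 0 →
        CSInf m (EuclideanSpace ℝ (Fin n)) ⇑g := by
  have : NeZero n := ⟨by omega⟩
  let i₀ : Fin m := ⟨0, hm⟩
  obtain ⟨γ, hγ⟩ := exists_continuous_forall_not_isBounded_preimage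
    (X := ℝ × EuclideanSpace ℝ (Fin n))
  let φ := γ.comp (EuclideanSpace.proj (𝕜 := ℝ) i₀ : C(EuclideanSpace ℝ (Fin m), ℝ))
  have hproj : Function.Surjective (EuclideanSpace.proj (𝕜 := ℝ) i₀) := fun t ↦
    ⟨EuclideanSpace.single i₀ t, by simp⟩
  have hφ (p) : ¬IsBounded (φ ⁻¹' {p}) :=
    (EuclideanSpace.proj (𝕜 := ℝ) i₀).lipschitz.not_isBounded_preimage hproj (hγ p)
  have hΨ := fstSMulSnd_injective fun p ↦ (nonempty_of_not_isBounded (hφ p)).imp fun _ ↦ id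
  refine ⟨ℝ, fstSMulSnd φ ∘ expMul, Cardinal.mk_real,
    linearIndependent_expMul.map' _ (LinearMap.ker_eq_bot.2 hΨ), fun g hg hg₀ ↦ ?_⟩
  obtain ⟨h, rfl⟩ : g ∈ LinearMap.range (fstSMulSnd φ) :=
    Submodule.span_le.2 (range_subset_iff.2 fun c ↦ LinearMap.mem_range_self _ _) hg
  exact ⟨(fstSMulSnd φ h).continuous,
    not_isBounded_fstSMulSnd_preimage hφ (by rintro rfl; exact hg₀ (map_zero _))⟩
end

section
/- Let X be a Hausdorff topological vector space over ℝ whose topology is induced by a complete metric (an F-space) and which is infinite-dimensional as a real vector space. Then X is not σ-compact, i.e., X cannot be written as a countable union of compact subsets. -/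
/-! By the Baire category theorem one of the compact pieces has nonempty interior, so translates of
it are compact neighbourhoods of every point and the space is locally compact; Riesz's theorem
then forces finite dimension. -/

@[to_additive]
theorem IsTopologicalGroup.locallyCompactSpace_of_baireSpace_of_sigmaCompactSpace
    (G : Type*) [TopologicalSpace G] [Group G] [IsTopologicalGroup G] [T2Space G]
    [BaireSpace G] [SigmaCompactSpace G] : LocallyCompactSpace G := by
  obtain ⟨n, x, hx⟩ := nonempty_interior_of_iUnion_of_closed
    (fun n ↦ (isCompact_compactCovering G n).isClosed) (iUnion_compactCovering G)
  exact (isCompact_compactCovering G n).locallyCompactSpace_of_mem_nhds_of_group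
    (mem_interior_iff_mem_nhds.1 hx)

theorem stmt13 (X : Type*) [AddCommGroup X] [Module ℝ X] [tX : TopologicalSpace X]
    [IsTopologicalAddGroup X] [ContinuousSMul ℝ X] [T2Space X]
    (hmetric : ∃ mX : MetricSpace X,
      mX.toUniformSpace.toTopologicalSpace = tX ∧ @CompleteSpace X mX.toUniformSpace)
    (hinf : ¬ Module.Finite ℝ X) :
    ¬ ∃ K : ℕ → Set X, (∀ n, IsCompact (K n)) ∧ (⋃ n, K n) = Set.univ := by
  rintro ⟨K, hK_compact, hK_cover⟩
  have : TopologicalSpace.IsCompletelyMetrizableSpace X := ⟨hmetric⟩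
  have : SigmaCompactSpace X := ⟨⟨K, hK_compact, hK_cover⟩⟩
  have := IsTopologicalAddGroup.locallyCompactSpace_of_baireSpace_of_sigmaCompactSpace X
  exact hinf (FiniteDimensional.of_locallyCompactSpace ℝ)
end

section
/- Let Λ and Γ be infinite sets with card Γ ≤ card Λ, and endow both ℝ^Λ and ℝ^Γ with their uniform topologies. Then the set CS(ℝ^Λ, ℝ^Γ) of continuous surjections from ℝ^Λ onto ℝ^Γ is 2^{card Γ}-lineable: there exists a linearly independent family of cardinality 2^{card Γ} in the real vector space of all maps ℝ^Λ → ℝ^Γ (with pointwise operations) such that every nonzero finite linear combination of its members is a continuous surjection from ℝ^Λ onto ℝ^Γ. -/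
/-!
Embed `Γ × Θ` into `Λ`, where `Θ = Finset Γ × Finset (Finset Γ)` has cardinality `#Γ`, and to
`A ⊆ Γ` attach the set `S_A ⊆ Θ` of pairs `(F, Q)` with `F ∩ A ∈ Q`. No `S_A` is covered by
finitely many other `S_B`: separate `A` from them on a finite `F` and take `(F, {F ∩ A})`.
The maps `T_A x γ = inf_{θ ∈ S_A} x (γ, θ)` are 1-Lipschitz for the sup metric, so all their
linear combinations are uniformly continuous. A combination `∑ c_A T_A` with `∑ c_A ≠ 0` reaches
`y` on functions constant on slices. If `∑ c_A = 0`, some `c_B` has the sign that makes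
`t = y γ / c_B ≤ 0`; putting `t` at a point of the `γ`-slice private to `S_B`, and `0` elsewhere,
gives `T_B = t` and `T_A = 0` for the other `A`. Surjectivity of nonzero combinations yields
linear independence, and there are `2 ^ #Γ` sets `A`.
-/

open scoped UniformConvergence

universe u

open Set Function Submodule UniformFun

theorem Real.abs_iInf_sub_iInf_le {ι : Type*} [Nonempty ι] {f g : ι → ℝ} {δ : ℝ}
    (h : ∀ i, |f i - g i| ≤ δ) : |(⨅ i, f i) - ⨅ i, g i| ≤ δ := by
  have lower : ∀ {f g : ι → ℝ}, (∀ i, f i ≤ g i + δ) → BddBelow (range f) →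
      ∀ i, (⨅ i, f i) - δ ≤ g i := fun hfg hf i => by linarith [ciInf_le hf i, hfg i]
  have hfg : ∀ i, f i ≤ g i + δ := fun i => by linarith [(abs_le.1 (h i)).2]
  have hgf : ∀ i, g i ≤ f i + δ := fun i => by linarith [(abs_le.1 (h i)).1]
  by_cases hf : BddBelow (range f)
  · have hg : BddBelow (range g) := ⟨_, forall_mem_range.2 (lower hfg hf)⟩
    rw [abs_sub_le_iff]
    constructor <;> linarith [le_ciInf (lower hfg hf), le_ciInf (lower hgf hg)]
  · -- both infima are the junk value `0`
    have hg : ¬BddBelow (range g) := fun hg => hf ⟨_, forall_mem_range.2 (lower hgf hg)⟩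
    rw [Real.iInf_of_not_bddBelow hf, Real.iInf_of_not_bddBelow hg, sub_zero, abs_zero]
    exact (abs_nonneg _).trans (h (Classical.arbitrary ι))

theorem UniformFun.uniformContinuous_of_abs_sub_le {α β : Type*} {f : (α → ℝ) → β → ℝ}
    (hf : ∀ x y δ, (∀ a, |x a - y a| ≤ δ) → ∀ b, |f x b - f y b| ≤ δ) :
    UniformContinuous fun x : α →ᵤ ℝ => ofFun (f (toFun x)) := by
  have hα := UniformFun.hasBasis_uniformity_of_basis α ℝ Metric.uniformity_basis_dist
  have hβ := UniformFun.hasBasis_uniformity_of_basis β ℝ Metric.uniformity_basis_dist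
  rw [hα.uniformContinuous_iff hβ]
  intro ε hε
  refine ⟨ε / 2, half_pos hε, fun x y hxy b => ?_⟩
  have hxy' : ∀ a, |toFun x a - toFun y a| ≤ ε / 2 := fun a => (hxy a).le
  exact (hf _ _ _ hxy' b).trans_lt (half_lt_self hε)

def HasPrivatePoints {ι Θ : Type*} (S : ι → Set Θ) : Prop :=
  ∀ (s : Finset ι) (j : ι), ∃ θ ∈ S j, ∀ i ∈ s, i ≠ j → θ ∉ S i

theorem HasPrivatePoints.nonempty {ι Θ : Type*} {S : ι → Set Θ} (hS : HasPrivatePoints S)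
    (j : ι) : (S j).Nonempty :=
  let ⟨θ, hθ, _⟩ := hS ∅ j; ⟨θ, hθ⟩

section TraceSet

variable {Γ : Type*}

abbrev TraceSpace (Γ : Type*) := Finset Γ × Finset (Finset Γ)

open Classical in
def traceSet (A : Set Γ) : Set (TraceSpace Γ) :=
  {p | p.1.filter (· ∈ A) ∈ p.2}

theorem exists_finset_separating (s : Finset (Set Γ)) (A : Set Γ) :
    ∃ F : Finset Γ, ∀ B ∈ s, B ≠ A → ∃ γ ∈ F, ¬(γ ∈ B ↔ γ ∈ A) := by
  classical
  induction s using Finset.induction_on with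
  | empty => exact ⟨∅, by simp⟩
  | insert B s _ ih =>
    obtain ⟨F, hF⟩ := ih
    by_cases hBA : B = A
    · refine ⟨F, fun B' hB' hne => hF B' ?_ hne⟩
      rcases Finset.mem_insert.1 hB' with rfl | h
      exacts [absurd hBA hne, h]
    · obtain ⟨γ, hγ⟩ : ∃ γ, ¬(γ ∈ B ↔ γ ∈ A) := by
        simpa [Set.ext_iff] using hBA
      refine ⟨insert γ F, fun B' hB' hne => ?_⟩
      rcases Finset.mem_insert.1 hB' with rfl | h
      · exact ⟨γ, Finset.mem_insert_self γ F, hγ⟩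
      · obtain ⟨δ, hδ, hδ'⟩ := hF B' h hne
        exact ⟨δ, Finset.mem_insert_of_mem hδ, hδ'⟩

theorem hasPrivatePoints_traceSet : HasPrivatePoints (traceSet (Γ := Γ)) := by
  classical
  intro s A
  obtain ⟨F, hF⟩ := exists_finset_separating s A
  refine ⟨(F, {F.filter (· ∈ A)}), by simp [traceSet], fun B hB hBA hmem => ?_⟩
  obtain ⟨γ, hγF, hγ⟩ := hF B hB hBA
  have htrace : F.filter (· ∈ B) = F.filter (· ∈ A) := by simpa [traceSet] using hmem
  exact hγ (by simpa [hγF] using Finset.ext_iff.1 htrace γ)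

theorem mk_prod_traceSpace [Infinite Γ] : Cardinal.mk (Γ × TraceSpace Γ) = Cardinal.mk Γ := by
  simp [Cardinal.mk_prod, Cardinal.mk_finset_of_infinite, Cardinal.mul_eq_self]

end TraceSet

theorem Finsupp.exists_mem_support_div_nonpos {ι : Type*} {c : ι →₀ ℝ} (hc : c ≠ 0)
    (hsum : ∑ i ∈ c.support, c i = 0) (y : ℝ) : ∃ j ∈ c.support, y / c j ≤ 0 := by
  obtain ⟨i, hi⟩ := Finsupp.support_nonempty_iff.2 hc
  rcases le_or_gt y 0 with hy | hy
  · obtain ⟨j, hj, hcj⟩ := Finset.exists_pos_of_sum_zero_of_exists_nonzero c hsum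
      ⟨i, hi, Finsupp.mem_support_iff.1 hi⟩
    exact ⟨j, hj, div_nonpos_of_nonpos_of_nonneg hy hcj.le⟩
  · obtain ⟨j, hj, hcj⟩ := Finset.exists_pos_of_sum_zero_of_exists_nonzero (-c)
      (by simp [Finset.sum_neg_distrib, hsum]) ⟨i, hi, by simpa using hi⟩
    exact ⟨j, hj, div_nonpos_of_nonneg_of_nonpos hy.le (by simpa using hcj.le)⟩

theorem iInf_piSingle_of_mem {Θ : Type*} [DecidableEq Θ] {s : Set Θ} {θ₀ : Θ} (hθ₀ : θ₀ ∈ s)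
    {t : ℝ} (ht : t ≤ 0) : ⨅ θ : s, (Pi.single θ₀ t : Θ → ℝ) θ = t := by
  have : Nonempty s := ⟨⟨θ₀, hθ₀⟩⟩
  refine IsGLB.ciInf_eq (IsLeast.isGLB ⟨⟨⟨θ₀, hθ₀⟩, by simp⟩, ?_⟩)
  rintro _ ⟨θ, rfl⟩
  by_cases h : (θ : Θ) = θ₀
  · simp [h]
  · simp [Pi.single_eq_of_ne h, ht]

theorem iInf_piSingle_of_notMem {Θ : Type*} [DecidableEq Θ] {s : Set Θ} [Nonempty s] {θ₀ : Θ}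
    (hθ₀ : θ₀ ∉ s) (t : ℝ) : ⨅ θ : s, (Pi.single θ₀ t : Θ → ℝ) θ = 0 := by
  have hzero : ∀ θ : s, (Pi.single θ₀ t : Θ → ℝ) θ = 0 := fun θ => by
    simp [ne_of_mem_of_not_mem θ.2 hθ₀]
  simp [hzero]

section SliceInf

variable {ι Θ Γ Λ : Type*} (k : Γ × Θ → Λ) (S : ι → Set Θ)

noncomputable def sliceInf (i : ι) (x : Λ → ℝ) (γ : Γ) : ℝ :=
  ⨅ θ : S i, x (k (γ, θ))

variable {k S}

theorem uniformContinuous_sliceInf {i : ι} (hS : (S i).Nonempty) :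
    UniformContinuous fun x : Λ →ᵤ ℝ => ofFun (sliceInf k S i (toFun x)) :=
  haveI := hS.to_subtype
  UniformFun.uniformContinuous_of_abs_sub_le fun _ _ _ h _ =>
    Real.abs_iInf_sub_iInf_le fun _ => h _

theorem continuous_of_mem_span_sliceInf (hS : ∀ i, (S i).Nonempty) {g : (Λ → ℝ) → Γ → ℝ}
    (hg : g ∈ span ℝ (range (sliceInf k S))) :
    Continuous fun x : Λ →ᵤ ℝ => ofFun (g (toFun x)) := by
  induction hg using Submodule.span_induction with
  | mem _ h =>
    obtain ⟨i, rfl⟩ := h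
    exact (uniformContinuous_sliceInf (hS i)).continuous
  | zero => exact continuous_const
  | add _ _ _ _ hg hh => exact hg.add hh
  | smul a _ _ hg => exact hg.const_smul a

theorem exists_sum_mul_iInf_eq (hS : HasPrivatePoints S) {c : ι →₀ ℝ} (hc : c ≠ 0) (y : ℝ) :
    ∃ v : Θ → ℝ, ∑ i ∈ c.support, c i * ⨅ θ : S i, v θ = y := by
  classical
  have := fun i => (hS.nonempty i).to_subtype
  by_cases hsum : ∑ i ∈ c.support, c i = 0
  · obtain ⟨j, hj, hyj⟩ := Finsupp.exists_mem_support_div_nonpos hc hsum y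
    obtain ⟨θ₀, hθ₀, hpriv⟩ := hS c.support j
    refine ⟨Pi.single θ₀ (y / c j), ?_⟩
    rw [Finset.sum_eq_single_of_mem j hj fun i hi hij => by
      rw [iInf_piSingle_of_notMem (hpriv i hi hij), mul_zero]]
    rw [iInf_piSingle_of_mem hθ₀ hyj, mul_div_cancel₀ _ (Finsupp.mem_support_iff.1 hj)]
  · refine ⟨fun _ => y / ∑ i ∈ c.support, c i, ?_⟩
    simp only [ciInf_const, ← Finset.sum_mul, mul_div_cancel₀ _ hsum]

theorem surjective_linearCombination_sliceInf (hS : HasPrivatePoints S) (hk : Injective k)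
    {c : ι →₀ ℝ} (hc : c ≠ 0) : Surjective (Finsupp.linearCombination ℝ (sliceInf k S) c) := by
  intro y
  choose v hv using fun γ => exists_sum_mul_iInf_eq hS hc (y γ)
  obtain ⟨x, hx⟩ := hk.surjective_comp_right fun p : Γ × Θ => v p.1 p.2
  have hxk : ∀ p, x (k p) = v p.1 p.2 := congrFun hx
  refine ⟨x, funext fun γ => ?_⟩
  simp [Finsupp.linearCombination_apply, Finsupp.sum, sliceInf, hxk, hv]

theorem linearIndependent_sliceInf [Nonempty Γ] (hS : HasPrivatePoints S) (hk : Injective k) :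
    LinearIndependent ℝ (sliceInf k S) := by
  refine linearIndependent_iff.2 fun c hc => by_contra fun hc0 => ?_
  obtain ⟨x, hx⟩ := surjective_linearCombination_sliceInf hS hk hc0 1
  rw [hc] at hx
  exact zero_ne_one (congrFun hx (Classical.arbitrary Γ))

theorem surjective_of_mem_span_sliceInf (hS : HasPrivatePoints S) (hk : Injective k)
    {g : (Λ → ℝ) → Γ → ℝ} (hg : g ∈ span ℝ (range (sliceInf k S))) (hg0 : g ≠ 0) :
    Surjective g := by
  rw [← Finsupp.range_linearCombination] at hg
  obtain ⟨c, rfl⟩ := hg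
  exact surjective_linearCombination_sliceInf hS hk fun hc => hg0 (by simp [hc])

end SliceInf

theorem stmt19_general (Λ Γ : Type u) [Infinite Γ]
    (hcard : Cardinal.mk Γ ≤ Cardinal.mk Λ) :
    ∃ (ι : Type u) (F : ι → ((Λ → ℝ) → (Γ → ℝ))),
      Cardinal.mk ι = 2 ^ Cardinal.mk Γ ∧
      LinearIndependent ℝ F ∧
      ∀ g ∈ Submodule.span ℝ (Set.range F), g ≠ 0 →
        Continuous (fun x : Λ →ᵤ ℝ =>
          (UniformFun.ofFun (g (UniformFun.toFun x)) : Γ →ᵤ ℝ)) ∧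
        Function.Surjective g := by
  obtain ⟨k⟩ : Nonempty (Γ × TraceSpace Γ ↪ Λ) := by
    rw [← Cardinal.le_def, mk_prod_traceSpace]
    exact hcard
  have hS := hasPrivatePoints_traceSet (Γ := Γ)
  exact ⟨Set Γ, sliceInf k traceSet, Cardinal.mk_set, linearIndependent_sliceInf hS k.injective,
    fun g hg hg0 => ⟨continuous_of_mem_span_sliceInf hS.nonempty hg,
      surjective_of_mem_span_sliceInf hS k.injective hg hg0⟩⟩

theorem stmt19 (Λ Γ : Type u) [Infinite Λ] [Infinite Γ]
    (hcard : Cardinal.mk Γ ≤ Cardinal.mk Λ) :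
    ∃ (ι : Type u) (F : ι → ((Λ → ℝ) → (Γ → ℝ))),
      Cardinal.mk ι = 2 ^ Cardinal.mk Γ ∧
      LinearIndependent ℝ F ∧
      ∀ g ∈ Submodule.span ℝ (Set.range F), g ≠ 0 →
        Continuous (fun x : Λ →ᵤ ℝ =>
          (UniformFun.ofFun (g (UniformFun.toFun x)) : Γ →ᵤ ℝ)) ∧
        Function.Surjective g :=
  stmt19_general Λ Γ hcard
end
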